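/- Let B be a complex vector space and for each n ≥ 1 let Ser(B) be the space of sequences F = (F^[n])_{n≥1} where F^[n] : B^{n−1} → B is multilinear (F^[1] ∈ B). Define BM : Ser(B) → Ser(B) by (BM F)^[n] = Σ_{π ∈ Int(n)} F^[π], where F^[π] is the product of terms of F along the blocks of the interval partition π. Then BM is a bijection, with inverse given by F^[n] = Σ_{π ∈ Int(n)} (−1)^{|π|−1} G^[π] where G = BM F. -/

import Mathlib

/-! Recursive encoding of non-crossing partitions.

An `NCS` encodes a non-crossing partition of `{1,…,n}` (where `n = sz π`):
`empty` is the empty partition of the empty set, and `cons inner tail` is the partition whose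
block containing `1` has `inner.length + 1` elements, with the non-crossing partition
`inner[j]` nested in the gap after the `(j+1)`-st element of that block, and with `tail` the
partition of the points lying after the largest element of that block. -/
inductive NCS : Type
  | empty : NCS
  | cons (inner : List NCS) (tail : NCS) : NCS

namespace NCS

mutual
  /-- The number of points of the underlying set of the encoded partition. -/
  def sz : NCS → ℕ
    | .empty => 0
    | .cons inner tail => szL inner + 1 + sz tail
  /-- `szL inner = inner.length + Σ sz`. -/
  def szL : List NCS → ℕ
    | [] => 0
    | g :: gs => sz g + 1 + szL gs
end

mutual
  /-- The number of blocks of the encoded partition. -/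
  def nbl : NCS → ℕ
    | .empty => 0
    | .cons inner tail => 1 + nblL inner + nbl tail
  def nblL : List NCS → ℕ
    | [] => 0
    | g :: gs => nbl g + nblL gs
end

/-- Interval partitions: all the gaps are empty, recursively. -/
def isIntB : NCS → Bool
  | .empty => true
  | .cons inner tail => inner.all (fun g => match g with | .empty => true | _ => false) && isIntB tail

/-- `π ≪ 1ₙ`: the block containing `1` also contains `n`, i.e. the tail is empty. -/
def isOneB : NCS → Bool
  | .cons _ .empty => true
  | _ => false

end NCS
namespace NCS

mutual
  /-- The list of all encoded non-crossing partitions of `{1,…,n}`. -/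
  def allNC : ℕ → List NCS
    | 0 => [NCS.empty]
    | n + 1 =>
        (List.range (n + 1)).attach.flatMap fun j =>
          (allL j.1).flatMap fun inner =>
            (allNC (n - j.1)).map fun tail => NCS.cons inner tail
  termination_by n => n
  decreasing_by
    · have := j.2; simp [List.mem_range] at this; omega
    · have := j.2; simp [List.mem_range] at this; omega
  /-- All lists `gs` of encoded partitions with `szL gs = m`. -/
  def allL : ℕ → List (List NCS)
    | 0 => [[]]
    | m + 1 =>
        (List.range (m + 1)).attach.flatMap fun s =>
          (allNC s.1).flatMap fun g =>
            (allL (m - s.1)).map fun rest => g :: rest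
  termination_by m => m
  decreasing_by
    · have := s.2; simp [List.mem_range] at this; omega
    · have := s.2; simp [List.mem_range] at this; omega
end

end NCS

/-! Nested functionals and `B`-series. -/

section Series

variable {B : Type*} [Ring B] [Algebra ℂ B]

open NCS

mutual
  /-- Nested evaluation with boundary terms.  For an encoded partition `π` of `n` points and a
  list `cs = [c_0, c_1, …, c_n]`, `wEval F π cs` is the value of the parenthesized expression
  `c_0 W_1 c_1 W_2 c_2 ⋯ W_n c_n`, where the words `W_m` are the nesting words of `π` and
  `F k` is the term of the series with `k` arguments (i.e. the paper's `F^[k+1]`). -/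
  def wEval (F : ℕ → List B → B) : NCS → List B → B
    | .empty, cs => cs.headD 1
    | .cons inner tail, cs =>
        cs.headD 1 * F inner.length (wArgs F inner cs.tail) *
          wEval F tail (cs.tail.drop (NCS.szL inner))
  /-- The list of arguments fed to the term of the outer block: one argument per gap. -/
  def wArgs (F : ℕ → List B → B) : List NCS → List B → List B
    | [], _ => []
    | g :: gs, cs =>
        wEval F g (cs.take (NCS.sz g + 1)) :: wArgs F gs (cs.drop (NCS.sz g + 1))
end

/-- The nested functional `F^[π]` of a series, evaluated on a list of `sz π − 1` arguments. -/
def ncFun (F : ℕ → List B → B) (π : NCS) (bs : List B) : B :=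
  wEval F π ((1 : B) :: (bs ++ [1]))

/-- Two-coloured nested evaluation: the blocks of the outermost chain use the series `Fo`,
all blocks nested inside the gaps use the series `Fi`. -/
def wEvalO (Fo Fi : ℕ → List B → B) : NCS → List B → B
  | .empty, cs => cs.headD 1
  | .cons inner tail, cs =>
      cs.headD 1 * Fo inner.length (wArgs Fi inner cs.tail) *
        wEvalO Fo Fi tail (cs.tail.drop (NCS.szL inner))

/-- The coloured nested functional `(Fo, Fi)^[π, o_π]`: for `π ≪ 1ₙ` the unique outer block
carries a term of `Fo`, all other blocks carry terms of `Fi`. -/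
def ncFunO (Fo Fi : ℕ → List B → B) (π : NCS) (bs : List B) : B :=
  wEvalO Fo Fi π ((1 : B) :: (bs ++ [1]))

end Series

/-- A `B`-series: the term `F n` is a function of `n` arguments (the paper's `F^[n+1]`),
presented on lists of length exactly `n`. -/
def Ser (B : Type*) : Type _ :=
  (n : ℕ) → {l : List B // l.length = n} → B

instance (B : Type*) [One B] : Nonempty (Ser B) :=
  ⟨fun _ _ => 1⟩

/-- Application of a series to an arbitrary list (padded/truncated to the exact arity). -/
def Ser.app {B : Type*} [One B] (F : Ser B) (n : ℕ) (l : List B) : B :=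
  F n ⟨List.takeD n l 1, by simp⟩

section Transforms

variable {B : Type*} [Ring B] [Algebra ℂ B]

open NCS

/-- The series is multilinear: each term is (the restriction of) a `ℂ`-multilinear map. -/
def Ser.IsML (F : Ser B) : Prop :=
  ∀ n : ℕ, ∃ m : MultilinearMap ℂ (fun _ : Fin n => B) B,
    ∀ l : {l : List B // l.length = n}, F n l = m fun i => l.1.getD i.1 1

/-- The map `RM`: `(RM F)^[n] = Σ_{π ∈ NC(n)} F^[π]`. -/
def RMt (F : Ser B) : Ser B := fun n l =>
  ((allNC (n + 1)).map fun π => ncFun (F.app) π l.1).sum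

/-- The map `BM`: `(BM F)^[n] = Σ_{π ∈ Int(n)} F^[π]`. -/
def BMt (F : Ser B) : Ser B := fun n l =>
  (((allNC (n + 1)).filter fun π => isIntB π).map fun π => ncFun (F.app) π l.1).sum

/-- The map `RB`: `(RB F)^[n] = Σ_{π ∈ NC(n), π ≪ 1ₙ} F^[π]`. -/
def RBt (F : Ser B) : Ser B := fun n l =>
  (((allNC (n + 1)).filter fun π => isOneB π).map fun π => ncFun (F.app) π l.1).sum

/-- The map `RB_α`: `(RB_α F)^[n] = Σ_{π ≪ 1ₙ} (F, α∘F)^[π, o_π]`, the unique outer block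
carrying a term of `F` and all other blocks carrying terms of `α ∘ F`. -/
def RBa (α : B →ₗ[ℂ] B) (F : Ser B) : Ser B := fun n l =>
  (((allNC (n + 1)).filter fun π => isOneB π).map fun π =>
    ncFunO (F.app) (fun k bs => α (F.app k bs)) π l.1).sum

/-- Termwise composition `α ∘ F` of a linear map with a series. -/
def cS (α : B →ₗ[ℂ] B) (F : Ser B) : Ser B := fun n l => α (F n l)

/-- We identify `Σ_alg(B)` with `Ser B` via moment series, so an algebraic distribution *is*
its moment series.  The `R`-transform: the unique series with `RM (R_μ) = M_μ`. -/
noncomputable def Rtr (μ : Ser B) : Ser B := Function.invFun (RMt (B := B)) μ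

/-- The `B`-transform: the unique series with `BM (B_μ) = M_μ`. -/
noncomputable def Btr (μ : Ser B) : Ser B := Function.invFun (BMt (B := B)) μ

/-- The transformation `𝔹_α`, defined by `R_{𝔹_α(μ)} = RB_α (R_μ)`. -/
noncomputable def Bop (α : B →ₗ[ℂ] B) (μ : Ser B) : Ser B := RMt (RBa α (Rtr μ))

/-- The Boolean-to-free Bercovici–Pata bijection `𝔹`, defined by `R_{𝔹(μ)} = B_μ`. -/
noncomputable def BPbij (μ : Ser B) : Ser B := RMt (Btr μ)

/-- Free convolution power: `R_{μ^{⊞β}} = β ∘ R_μ`. -/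
noncomputable def freePow (β : B →ₗ[ℂ] B) (μ : Ser B) : Ser B := RMt (cS β (Rtr μ))

/-- Boolean convolution power: `B_{μ^{⊎β}} = β ∘ B_μ`. -/
noncomputable def boolPow (β : B →ₗ[ℂ] B) (μ : Ser B) : Ser B := BMt (cS β (Btr μ))

end Transforms

/-! Write the arguments of `F^[n]` as the word `1, b₁, …, b_{n-1}, 1` and give a block of
consecutive points the weight `w(s, t) = c_s F^[t-s](c_{s+1}, …, c_{t-1})`. An interval partition
is a chain of cut points, so `(BM F)^[n]` is the `(0, n)` entry of `(1 - w)⁻¹ - 1` in the incidence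
algebra of `ℕ` (`chainSum`), and the block weights of `BM F` are in turn chain sums of those of
`F`. The signed sum over interval partitions is the same chain sum for `-F`, so the inversion
formula is the identity `1 - (1 + W)⁻¹ = w` for `1 + W = (1 - w)⁻¹`; read in both directions it
gives both inverse identities. Multilinearity holds because each argument `bᵢ` enters a chain
product through exactly one factor, linearly. -/

section ListLemmas

lemma List.flatMap_eq_flatMap_filter {α β : Type*} {l : List α} {g : α → List β} (p : α → Bool)
    (h : ∀ a ∈ l, p a = false → g a = []) : l.flatMap g = (l.filter p).flatMap g := by
  induction l with
  | nil => rfl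
  | cons a l ih =>
    have ih := ih fun b hb => h b (List.mem_cons_of_mem a hb)
    by_cases ha : p a <;> simp_all

lemma List.getD_drop_eq {α : Type*} (l : List α) (a j : ℕ) (d : α) :
    (l.drop a).getD j d = l.getD (a + j) d := by
  simp

lemma List.getD_set_of_ne {α : Type*} (l : List α) {i j : ℕ} (x d : α) (h : i ≠ j) :
    (l.set i x).getD j d = l.getD j d := by
  simp [List.getElem?_set_ne h]

lemma List.getD_cons_append_singleton {α : Type*} {l : List α} {n : ℕ} (hl : l.length = n)
    (c d : α) : (c :: (l ++ [d])).getD (n + 1) d = d := by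
  simp [hl]

lemma List.ofFn_update {α : Type*} {n : ℕ} (v : Fin n → α) (i : Fin n) (x : α) :
    List.ofFn (Function.update v i x) = (List.ofFn v).set i x := by
  refine List.ext_getElem (by simp) fun j _ _ => ?_
  simp only [List.getElem_ofFn, List.getElem_set, Function.update_apply, Fin.ext_iff, eq_comm]

end ListLemmas

section ChainSum

variable {B : Type*} [Ring B]

/-- `chainSum w p m` is the sum over all chains `p = t₀ < t₁ < ⋯ < t_k = p + m` of
`w t₀ t₁ * w t₁ t₂ * ⋯ * w t_{k-1} t_k`. -/
def chainSum (w : ℕ → ℕ → B) : ℕ → ℕ → B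
  | _, 0 => 1
  | p, m + 1 => ∑ d ∈ Finset.range (m + 1), w p (p + d + 1) * chainSum w (p + d + 1) (m - d)
  termination_by _ m => m

@[simp]
lemma chainSum_zero (w : ℕ → ℕ → B) (p : ℕ) : chainSum w p 0 = 1 := by
  rw [chainSum]

lemma chainSum_succ (w : ℕ → ℕ → B) (p m : ℕ) :
    chainSum w p (m + 1) =
      ∑ d ∈ Finset.range (m + 1), w p (p + d + 1) * chainSum w (p + d + 1) (m - d) := by
  rw [chainSum]

lemma chainSum_congr_shift {w w' : ℕ → ℕ → B} (a : ℕ) {q k : ℕ}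
    (h : ∀ s t, q ≤ s → s < t → t ≤ q + k → w s t = w' (a + s) (a + t)) :
    chainSum w q k = chainSum w' (a + q) k := by
  induction k using Nat.strong_induction_on generalizing q with
  | _ k ih =>
    cases k with
    | zero => simp
    | succ m =>
      rw [chainSum_succ, chainSum_succ]
      refine Finset.sum_congr rfl fun d hd => ?_
      have hd : d < m + 1 := Finset.mem_range.mp hd
      rw [h q (q + d + 1) le_rfl (by omega) (by omega),
        ih (m - d) (by omega) fun s t hs hst ht => h s t (by omega) hst (by omega)]
      simp only [add_assoc]

lemma chainSum_congr {w w' : ℕ → ℕ → B} {q k : ℕ}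
    (h : ∀ s t, q ≤ s → s < t → t ≤ q + k → w s t = w' s t) :
    chainSum w q k = chainSum w' q k := by
  simpa using chainSum_congr_shift 0 (w' := w') (by simpa using h)

lemma chainSum_succ_eq_sum_mul_last (w : ℕ → ℕ → B) (m p : ℕ) :
    chainSum w p (m + 1) =
      ∑ t ∈ Finset.range (m + 1), chainSum w p t * w (p + t) (p + m + 1) := by
  induction m using Nat.strong_induction_on generalizing p with
  | _ m ih =>
    have inner : ∀ d ∈ Finset.range m, w p (p + d + 1) * chainSum w (p + d + 1) (m - d) =
        ∑ t ∈ Finset.range (m - d),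
          w p (p + d + 1) * chainSum w (p + d + 1) t * w (p + d + 1 + t) (p + m + 1) := by
      intro d hd
      have hd : d < m := Finset.mem_range.mp hd
      rw [show m - d = m - d - 1 + 1 by omega, ih (m - d - 1) (by omega), Finset.mul_sum]
      refine Finset.sum_congr rfl fun t _ => ?_
      rw [mul_assoc, show p + d + 1 + (m - d - 1) + 1 = p + m + 1 by omega]
    rw [chainSum_succ, Finset.sum_range_succ, Finset.sum_congr rfl inner,
      ← Finset.sum_range_diag_flip m fun d t =>
        w p (p + d + 1) * chainSum w (p + d + 1) t * w (p + d + 1 + t) (p + m + 1),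
      Finset.sum_range_succ' _ m, Nat.sub_self, chainSum_zero,
      chainSum_zero, mul_one, one_mul, add_zero]
    congr 1
    refine Finset.sum_congr rfl fun e he => ?_
    have he : e < m := Finset.mem_range.mp he
    rw [chainSum_succ, Finset.sum_mul]
    refine Finset.sum_congr rfl fun d hd => ?_
    have hd : d < e + 1 := Finset.mem_range.mp hd
    rw [show p + d + 1 + (e - d) = p + (e + 1) by omega]

/-- With `W s t = chainSum w s (t - s)`, i.e. `1 + W = (1 - w)⁻¹` in the incidence algebra of
`ℕ`, this is `(1 + W)⁻¹ = 1 - w`. -/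
lemma chainSum_neg_chainSum (w : ℕ → ℕ → B) (m p : ℕ) :
    chainSum (fun s t => -chainSum w s (t - s)) p (m + 1) = -w p (p + m + 1) := by
  induction m using Nat.strong_induction_on generalizing p with
  | _ m ih =>
    have step : ∀ d ∈ Finset.range m,
        -chainSum w p (p + d + 1 - p) *
            chainSum (fun s t => -chainSum w s (t - s)) (p + d + 1) (m - d) =
          chainSum w p (d + 1) * w (p + (d + 1)) (p + m + 1) := by
      intro d hd
      have hd : d < m := Finset.mem_range.mp hd
      rw [show m - d = m - d - 1 + 1 by omega, ih (m - d - 1) (by omega), neg_mul_neg,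
        show p + d + 1 - p = d + 1 by omega, show p + d + 1 + (m - d - 1) + 1 = p + m + 1 by omega,
        add_assoc p d 1]
    rw [chainSum_succ, Finset.sum_range_succ, Finset.sum_congr rfl step, Nat.sub_self,
      chainSum_zero, mul_one, show p + m + 1 - p = m + 1 by omega,
      chainSum_succ_eq_sum_mul_last w m p, Finset.sum_range_succ', chainSum_zero, one_mul,
      add_zero]
    abel

end ChainSum

section Linearity

variable {R M N : Type*} [CommSemiring R] [AddCommMonoid M] [Module R M] [AddCommMonoid N]
  [Module R N]

lemma IsLinearMap.finset_sum {ι : Type*} (s : Finset ι) {φ : ι → M → N}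
    (h : ∀ i ∈ s, IsLinearMap R (φ i)) : IsLinearMap R fun x => ∑ i ∈ s, φ i x where
  map_add x y := by
    rw [← Finset.sum_add_distrib]
    exact Finset.sum_congr rfl fun i hi => (h i hi).map_add x y
  map_smul c x := by
    rw [Finset.smul_sum]
    exact Finset.sum_congr rfl fun i hi => (h i hi).map_smul c x

lemma IsLinearMap.mul_const {A : Type*} [Semiring A] [Algebra R A] {φ : M → A}
    (hφ : IsLinearMap R φ) (b : A) : IsLinearMap R fun x => φ x * b where
  map_add x y := by rw [hφ.map_add, add_mul]
  map_smul c x := by rw [hφ.map_smul, smul_mul_assoc]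

lemma IsLinearMap.const_mul {A : Type*} [Semiring A] [Algebra R A] {φ : M → A} (a : A)
    (hφ : IsLinearMap R φ) : IsLinearMap R fun x => a * φ x where
  map_add x y := by rw [hφ.map_add, mul_add]
  map_smul c x := by rw [hφ.map_smul, mul_smul_comm]

lemma exists_multilinearMap_of_isLinearMap_update {ι : Type*} [DecidableEq ι] (φ : (ι → M) → N)
    (h : ∀ v i, IsLinearMap R fun x => φ (Function.update v i x)) :
    ∃ m : MultilinearMap R (fun _ : ι => M) N, ⇑m = φ :=
  ⟨{ toFun := φ
     map_update_add' := fun v i x y => by convert (h v i).map_add x y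
     map_update_smul' := fun v i c x => by convert (h v i).map_smul c x }, rfl⟩

lemma isLinearMap_chainSum {B : Type*} [Ring B] [Algebra R B] {W : M → ℕ → ℕ → B} {i : ℕ}
    (hconst : ∀ s t, s < t → i < s ∨ t ≤ i → ∀ x, W x s t = W 0 s t)
    (hlin : ∀ s t, s ≤ i → i < t → IsLinearMap R fun x => W x s t) {q k : ℕ} (hq : q ≤ i)
    (hk : i < q + k) : IsLinearMap R fun x => chainSum (W x) q k := by
  induction k using Nat.strong_induction_on generalizing q with
  | _ k ih =>
    obtain ⟨m, rfl⟩ : ∃ m, k = m + 1 := ⟨k - 1, by omega⟩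
    simp_rw [chainSum_succ]
    refine IsLinearMap.finset_sum _ fun d hd => ?_
    have hd : d < m + 1 := Finset.mem_range.mp hd
    by_cases hid : i ≤ q + d
    · have hrest : ∀ x, chainSum (W x) (q + d + 1) (m - d) = chainSum (W 0) (q + d + 1) (m - d) :=
        fun x => chainSum_congr fun s t hs hst _ => hconst s t hst (Or.inl (by omega)) x
      simp_rw [hrest]
      exact (hlin q (q + d + 1) hq (by omega)).mul_const _
    · have hfirst : ∀ x, W x q (q + d + 1) = W 0 q (q + d + 1) :=
        hconst q (q + d + 1) (by omega) (Or.inr (by omega))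
      simp_rw [hfirst]
      exact (ih (m - d) (by omega) (by omega) (by omega)).const_mul _

end Linearity

namespace NCS

def isEmptyB : NCS → Bool
  | .empty => true
  | _ => false

lemma isIntB_cons (inner : List NCS) (tail : NCS) :
    isIntB (.cons inner tail) = (inner.all isEmptyB && isIntB tail) := rfl

lemma nbl_cons_replicate (j : ℕ) (tail : NCS) :
    nbl (.cons (List.replicate j .empty) tail) = nbl tail + 1 := by
  have h : nblL (List.replicate j .empty) = 0 := by
    induction j with
    | zero => rw [List.replicate_zero, nblL]
    | succ k ih => rw [List.replicate_succ, nblL, ih, nbl, add_zero]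
  rw [nbl, h, add_zero, add_comm]

lemma allNC_zero : allNC 0 = [.empty] := by rw [allNC]

lemma allNC_succ (n : ℕ) : allNC (n + 1) =
    (List.range (n + 1)).flatMap fun j =>
      (allL j).flatMap fun inner => (allNC (n - j)).map (.cons inner) := by
  rw [allNC]; simp only [List.flatMap_subtype, List.unattach_attach]

lemma allL_zero : allL 0 = [[]] := by rw [allL]

lemma allL_succ (m : ℕ) : allL (m + 1) =
    (List.range (m + 1)).flatMap fun s =>
      (allNC s).flatMap fun g => (allL (m - s)).map (g :: ·) := by
  rw [allL]; simp only [List.flatMap_subtype, List.unattach_attach]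

lemma one_le_nbl_of_mem_allNC_succ {n : ℕ} {π : NCS} (h : π ∈ allNC (n + 1)) : 1 ≤ nbl π := by
  simp only [allNC_succ, List.mem_flatMap, List.mem_map] at h
  obtain ⟨_, _, _, _, _, _, rfl⟩ := h
  rw [nbl]
  omega

lemma isEmptyB_of_mem_allNC_succ {n : ℕ} {π : NCS} (h : π ∈ allNC (n + 1)) :
    isEmptyB π = false := by
  simp only [allNC_succ, List.mem_flatMap, List.mem_map] at h
  obtain ⟨_, _, _, _, _, _, rfl⟩ := h
  rfl

lemma filter_allL_all_isEmptyB (m : ℕ) :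
    (allL m).filter (·.all isEmptyB) = [List.replicate m .empty] := by
  induction m with
  | zero => rw [allL_zero]; rfl
  | succ k ih =>
    rw [allL_succ, List.range_succ_eq_map, List.flatMap_cons, List.filter_append, allNC_zero,
      List.flatMap_singleton, List.filter_map, Nat.sub_zero,
      show (allL k).filter ((·.all isEmptyB) ∘ (.empty :: ·)) = _ from ih,
      List.filter_eq_nil_iff.mpr, List.append_nil]
    · rfl
    · simp only [List.mem_flatMap, List.mem_map]
      rintro _ ⟨_, ⟨s, -, rfl⟩, g, hg, x, -, rfl⟩
      simp [isEmptyB_of_mem_allNC_succ hg]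

lemma filter_allNC_succ_isIntB (m : ℕ) : (allNC (m + 1)).filter isIntB =
    (List.range (m + 1)).flatMap fun j =>
      ((allNC (m - j)).filter isIntB).map (.cons (List.replicate j .empty)) := by
  simp only [allNC_succ, List.filter_flatMap, List.filter_map]
  refine List.flatMap_congr fun j _ => ?_
  rw [List.flatMap_eq_flatMap_filter (p := (·.all isEmptyB)), filter_allL_all_isEmptyB,
    List.flatMap_singleton]
  · exact congrArg _ (List.filter_congr fun tail _ => by simp [isIntB_cons, isEmptyB])
  · intro inner _ h
    simp [isIntB_cons, h]

end NCS

open NCS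

section IntervalSums

variable {B : Type*} [Ring B]

def intPartSum (m : ℕ) (h : NCS → B) : B :=
  (((allNC m).filter isIntB).map h).sum

lemma intPartSum_zero (h : NCS → B) : intPartSum 0 h = h .empty := by
  simp [intPartSum, allNC_zero, List.filter, isIntB]

lemma intPartSum_succ (m : ℕ) (h : NCS → B) :
    intPartSum (m + 1) h = ∑ j ∈ Finset.range (m + 1),
      intPartSum (m - j) fun tail => h (.cons (List.replicate j .empty) tail) := by
  simp only [intPartSum, filter_allNC_succ_isIntB, List.flatMap, List.map_flatten,
    List.sum_flatten, List.map_map, Function.comp_def]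
  rfl

lemma intPartSum_mul_left (m : ℕ) (a : B) (h : NCS → B) :
    intPartSum m (fun π => a * h π) = a * intPartSum m h :=
  List.sum_map_mul_left ..

/-- For `cs = 1, b₁, …, bₙ, 1` and `f k = F^[k+1]`, the factor `c_s F^[t-s](c_{s+1}, …, c_{t-1})`
that a block of the `t - s` points following the cut `s` contributes to `F^[π]`. -/
def blockWeight (f : ℕ → List B → B) (cs : List B) (s t : ℕ) : B :=
  cs.getD s 1 * f (t - s - 1) (List.ofFn fun k : Fin (t - s - 1) => cs.getD (s + 1 + k) 1)

lemma blockWeight_neg (f : ℕ → List B → B) (cs : List B) (s t : ℕ) :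
    blockWeight (-f) cs s t = -blockWeight f cs s t :=
  mul_neg ..

lemma blockWeight_shift_congr (f : ℕ → List B → B) {cs cs' : List B} (a : ℕ) {u v : ℕ}
    (huv : u < v) (h : ∀ j, u ≤ j → j < v → cs'.getD j 1 = cs.getD (a + j) 1) :
    blockWeight f cs' u v = blockWeight f cs (a + u) (a + v) := by
  unfold blockWeight
  rw [h u le_rfl huv, show a + v - (a + u) - 1 = v - u - 1 by omega]
  congr 2
  refine congrArg List.ofFn (funext fun k => ?_)
  rw [h _ (by omega) (by omega), add_assoc, add_assoc, add_assoc]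

lemma wArgs_replicate_empty (f : ℕ → List B → B) (j : ℕ) (cs : List B) :
    wArgs f (List.replicate j .empty) cs = List.ofFn fun k : Fin j => cs.getD k 1 := by
  induction j generalizing cs with
  | zero => rw [List.replicate_zero, wArgs, List.ofFn_zero]
  | succ k ih =>
    rw [List.replicate_succ, wArgs, ih, List.ofFn_succ, sz, wEval]
    cases cs <;> simp

lemma wEval_cons_replicate_empty (f : ℕ → List B → B) (j : ℕ) (tail : NCS) (cs : List B) :
    wEval f (.cons (List.replicate j .empty) tail) cs =
      blockWeight f cs 0 (j + 1) * wEval f tail (cs.drop (j + 1)) := by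
  have hszL : szL (List.replicate j .empty) = j := by
    induction j with
    | zero => rw [List.replicate_zero, szL]
    | succ k ih => rw [List.replicate_succ, szL, ih, sz]; omega
  rw [wEval, wArgs_replicate_empty, hszL, List.length_replicate, blockWeight, List.drop_tail]
  cases cs <;> simp [add_comm]

lemma wEval_cons_head (f : ℕ → List B → B) (π : NCS) (c : B) (cs : List B) :
    wEval f π (c :: cs) = c * wEval f π (1 :: cs) := by
  cases π <;> simp [wEval, mul_assoc]

/-- An interval partition of `m` points is a chain `0 = t₀ < ⋯ < t_k = m` of cut points. -/
lemma intPartSum_wEval (f : ℕ → List B → B) (m : ℕ) (cs : List B) :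
    intPartSum m (fun π => wEval f π cs) = chainSum (blockWeight f cs) 0 m * cs.getD m 1 := by
  induction m using Nat.strong_induction_on generalizing cs with
  | _ m ih =>
    cases m with
    | zero => cases cs <;> simp [intPartSum_zero, wEval]
    | succ m =>
      rw [intPartSum_succ, chainSum_succ, Finset.sum_mul]
      refine Finset.sum_congr rfl fun j hj => ?_
      have hj : j < m + 1 := Finset.mem_range.mp hj
      simp only [wEval_cons_replicate_empty, intPartSum_mul_left, ih (m - j) (by omega)]
      rw [chainSum_congr_shift (j + 1) fun s t _ _ _ =>
          blockWeight_shift_congr f (j + 1) (by omega) fun i _ _ => List.getD_drop_eq ..,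
        List.getD_drop_eq, show j + 1 + (m - j) = m + 1 by omega, add_zero, zero_add, mul_assoc]

lemma intPartSum_neg_one_pow_mul_wEval (f : ℕ → List B → B) (m : ℕ) (cs : List B) :
    intPartSum m (fun π => (-1) ^ nbl π * wEval f π cs) =
      intPartSum m (fun π => wEval (-f) π cs) := by
  induction m using Nat.strong_induction_on generalizing cs with
  | _ m ih =>
    cases m with
    | zero => simp [intPartSum_zero, nbl, wEval]
    | succ m =>
      rw [intPartSum_succ, intPartSum_succ]
      refine Finset.sum_congr rfl fun j hj => ?_
      have hj : j < m + 1 := Finset.mem_range.mp hj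
      have hsign : ∀ tail, (-1) ^ nbl (.cons (List.replicate j .empty) tail) *
          wEval f (.cons (List.replicate j .empty) tail) cs =
            -blockWeight f cs 0 (j + 1) * ((-1) ^ nbl tail * wEval f tail (cs.drop (j + 1))) := by
        intro tail
        rw [wEval_cons_replicate_empty, nbl_cons_replicate, pow_succ, mul_neg_one, neg_mul,
          ((Commute.neg_one_left _).pow_left _).left_comm, neg_mul]
      simp_rw [hsign, intPartSum_mul_left, ih (m - j) (by omega), wEval_cons_replicate_empty,
        blockWeight_neg, intPartSum_mul_left]

end IntervalSums

section Inversion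

variable {B : Type*} [Ring B]

def bmInv (G : Ser B) : Ser B := fun n l =>
  (((allNC (n + 1)).filter isIntB).map fun π => (-1 : B) ^ (nbl π - 1) * ncFun G.app π l.1).sum

lemma Ser.app_of_length (F : Ser B) {n : ℕ} {l : List B} (hl : l.length = n) :
    F.app n l = F n ⟨l, hl⟩ := by
  rw [Ser.app]
  congr
  rw [List.takeD_eq_take _ hl.ge, List.take_of_length_le hl.le]

lemma intPartSum_neg_one_pow_pred_mul (m : ℕ) (h : NCS → B) :
    intPartSum (m + 1) (fun π => (-1) ^ (nbl π - 1) * h π) =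
      -intPartSum (m + 1) (fun π => (-1) ^ nbl π * h π) := by
  rw [← neg_one_mul (intPartSum _ _), ← intPartSum_mul_left, intPartSum, intPartSum]
  refine congrArg List.sum (List.map_congr_left fun π hπ => ?_)
  have h1 := one_le_nbl_of_mem_allNC_succ (List.mem_filter.mp hπ).1
  rw [← mul_assoc, ← pow_succ', show nbl π + 1 = nbl π - 1 + 2 by omega, pow_add, neg_one_sq,
    mul_one]

lemma mul_BMt_app [Algebra ℂ B] (F : Ser B) {n : ℕ} {l : List B} (hl : l.length = n) (c : B) :
    c * (BMt F).app n l = chainSum (blockWeight F.app (c :: (l ++ [1]))) 0 (n + 1) := by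
  have h := intPartSum_wEval F.app (n + 1) (c :: (l ++ [1]))
  rw [List.getD_cons_append_singleton hl, mul_one] at h
  simp only [← h, wEval_cons_head _ _ c, intPartSum_mul_left, Ser.app_of_length _ hl]
  rfl

lemma mul_neg_bmInv_app (G : Ser B) {n : ℕ} {l : List B} (hl : l.length = n) (c : B) :
    c * -(bmInv G).app n l = chainSum (blockWeight (-G.app) (c :: (l ++ [1]))) 0 (n + 1) := by
  have h := intPartSum_wEval (-G.app) (n + 1) (c :: (l ++ [1]))
  rw [List.getD_cons_append_singleton hl, mul_one] at h
  simp only [← h, wEval_cons_head _ _ c, intPartSum_mul_left, ← intPartSum_neg_one_pow_mul_wEval,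
    Ser.app_of_length _ hl]
  rw [← neg_neg (intPartSum _ _), ← intPartSum_neg_one_pow_pred_mul]
  rfl

/-- The factor `c` in `hg` absorbs the letter in front of the block. -/
lemma blockWeight_eq_chainSum {f g : ℕ → List B → B}
    (hg : ∀ n (l : List B), l.length = n → ∀ c : B,
      c * g n l = chainSum (blockWeight f (c :: (l ++ [1]))) 0 (n + 1))
    (cs : List B) {s t : ℕ} (hst : s < t) :
    blockWeight g cs s t = chainSum (blockWeight f cs) s (t - s) := by
  obtain ⟨d, rfl⟩ : ∃ d, t = s + d + 1 := ⟨t - s - 1, by omega⟩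
  rw [blockWeight, show s + d + 1 - s - 1 = d by omega, show s + d + 1 - s = d + 1 by omega,
    hg _ _ (List.length_ofFn ..)]
  refine (chainSum_congr_shift s fun u v _ huv hv => blockWeight_shift_congr f s huv
    fun j _ hj => ?_).trans (by rw [add_zero])
  cases j with
  | zero => rfl
  | succ j =>
    rw [List.getD_cons_succ, List.getD_append _ _ _ _ (by simp; omega),
      List.getD_eq_getElem _ _ (by simp; omega), List.getElem_ofFn]
    exact congrArg (cs.getD · 1) (by dsimp only; omega)

lemma blockWeight_app_cons_append (F : Ser B) {n : ℕ} {l : List B} (hl : l.length = n) :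
    blockWeight F.app (1 :: (l ++ [1])) 0 (n + 1) = F n ⟨l, hl⟩ := by
  show 1 * F.app n (List.ofFn fun k : Fin n => (1 :: (l ++ [1])).getD (0 + 1 + k) 1) = _
  subst hl
  rw [one_mul, Ser.app_of_length _ (List.length_ofFn ..)]
  congr
  refine List.ext_getElem (by simp) fun i _ hi => ?_
  simp [add_comm 1]

lemma leftInverse_bmInv_BMt [Algebra ℂ B] : Function.LeftInverse (bmInv (B := B)) BMt := by
  intro F
  funext n l
  have h := mul_neg_bmInv_app (BMt F) l.2 1
  rw [one_mul, Ser.app_of_length _ l.2,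
    chainSum_congr fun s t _ hst _ => by
      rw [blockWeight_neg, blockWeight_eq_chainSum (fun _ _ => mul_BMt_app F) _ hst],
    chainSum_neg_chainSum, zero_add, blockWeight_app_cons_append _ l.2] at h
  exact neg_injective h

lemma rightInverse_bmInv_BMt [Algebra ℂ B] : Function.RightInverse (bmInv (B := B)) BMt := by
  intro G
  funext n l
  have h := mul_BMt_app (bmInv G) l.2 1
  rw [one_mul, Ser.app_of_length _ l.2,
    chainSum_congr fun s t _ hst _ => by
      rw [← neg_neg (blockWeight _ _ s t), ← blockWeight_neg,
        blockWeight_eq_chainSum (g := -(bmInv G).app) (fun _ _ => mul_neg_bmInv_app G) _ hst],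
    chainSum_neg_chainSum, zero_add, blockWeight_neg, neg_neg,
    blockWeight_app_cons_append _ l.2] at h
  exact h

end Inversion

section Multilinearity

variable {B : Type*} [Ring B]

lemma Ser.IsML.isLinearMap_app_ofFn_update [Algebra ℂ B] {F : Ser B} (hF : F.IsML) {k : ℕ}
    (v : Fin k → B) (j : Fin k) :
    IsLinearMap ℂ fun x => F.app k (List.ofFn (Function.update v j x)) := by
  obtain ⟨m, hm⟩ := hF k
  have happ : ∀ w : Fin k → B, F.app k (List.ofFn w) = m w := fun w => by
    rw [Ser.app_of_length _ (List.length_ofFn ..), hm]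
    congr
    funext i
    simp
  simp_rw [happ, ← MultilinearMap.toLinearMap_apply]
  exact LinearMap.isLinear _

lemma blockWeight_set_of_lt_or_le (f : ℕ → List B → B) (cs : List B) {i s t : ℕ} (x : B)
    (hst : s < t) (h : i < s ∨ t ≤ i) : blockWeight f (cs.set i x) s t = blockWeight f cs s t := by
  rw [blockWeight, blockWeight, List.getD_set_of_ne _ _ _ (by omega)]
  congr 2
  exact congrArg List.ofFn (funext fun k => List.getD_set_of_ne _ _ _ (by omega))

lemma isLinearMap_blockWeight_set [Algebra ℂ B] {F : Ser B} (hF : F.IsML) (cs : List B)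
    {i s t : ℕ} (hs : s ≤ i) (ht : i < t) (hi : i < cs.length) :
    IsLinearMap ℂ fun x => blockWeight F.app (cs.set i x) s t := by
  rcases hs.eq_or_lt with rfl | hs
  · have hw : ∀ x, blockWeight F.app (cs.set s x) s t =
        x * F.app (t - s - 1) (List.ofFn fun k : Fin (t - s - 1) => cs.getD (s + 1 + k) 1) :=
      fun x => by
        rw [blockWeight]
        congr 1
        · simp [hi]
        · exact congrArg _ (congrArg List.ofFn (funext fun k =>
            List.getD_set_of_ne _ _ _ (by omega)))
    simp_rw [hw]
    exact LinearMap.id.isLinear.mul_const _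
  · have hw : ∀ x, blockWeight F.app (cs.set i x) s t = cs.getD s 1 * F.app (t - s - 1)
        (List.ofFn (Function.update (fun k : Fin (t - s - 1) => cs.getD (s + 1 + k) 1)
          ⟨i - s - 1, by omega⟩ x)) := fun x => by
      rw [blockWeight, List.getD_set_of_ne _ _ _ (by omega)]
      congr 2
      refine congrArg List.ofFn (funext fun k => ?_)
      rw [Function.update_apply]
      split_ifs with hk
      · rw [show s + 1 + k = i by simp [Fin.ext_iff] at hk; omega]
        simp [hi]
      · exact List.getD_set_of_ne _ _ _ fun h => hk (Fin.ext (by simp; omega))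
    simp_rw [hw]
    exact (hF.isLinearMap_app_ofFn_update _ _).const_mul _

lemma BMt_isML [Algebra ℂ B] {F : Ser B} (hF : F.IsML) : (BMt F).IsML := by
  intro n
  have hBM : ∀ v : Fin n → B, BMt F n ⟨List.ofFn v, List.length_ofFn ..⟩ =
      chainSum (blockWeight F.app (1 :: (List.ofFn v ++ [1]))) 0 (n + 1) := fun v => by
    simpa [Ser.app_of_length] using mul_BMt_app F (List.length_ofFn (f := v)) 1
  obtain ⟨m, hm⟩ := exists_multilinearMap_of_isLinearMap_update (R := ℂ)
    (fun v : Fin n → B => BMt F n ⟨List.ofFn v, List.length_ofFn ..⟩) fun v i => by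
      have hset : ∀ x, 1 :: (List.ofFn (Function.update v i x) ++ [1]) =
          (1 :: (List.ofFn v ++ [1])).set (i + 1) x := fun x => by
        rw [List.ofFn_update, List.set_cons_succ, List.set_append_left _ _ (by simp)]
      simp_rw [hBM, hset]
      exact isLinearMap_chainSum
        (fun s t hst h x => by
          rw [blockWeight_set_of_lt_or_le _ _ _ hst h, blockWeight_set_of_lt_or_le _ _ _ hst h])
        (fun s t hs ht => isLinearMap_blockWeight_set hF _ hs ht (by simp)) (Nat.zero_le _)
        (by omega)
  refine ⟨m, fun l => ?_⟩
  obtain ⟨l, rfl⟩ := l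
  rw [hm]
  congr
  simp

end Multilinearity

/-- `BM` preserves multilinearity, is a bijection of `Ser B`, and its inverse is given by
`F^[n] = Σ_{π ∈ Int(n)} (−1)^{|π|−1} (BM F)^[π]`. -/
theorem BM_bijective_with_inverse (B : Type*) [Ring B] [Algebra ℂ B] :
    (∀ F : Ser B, F.IsML → (BMt F).IsML) ∧
    Function.Bijective (BMt (B := B)) ∧
    (∀ (F : Ser B) (n : ℕ) (l : {l : List B // l.length = n}),
      F n l =
        (((NCS.allNC (n + 1)).filter fun π => NCS.isIntB π).map fun π =>
          ((-1 : B) ^ (NCS.nbl π - 1)) * ncFun ((BMt F).app) π l.1).sum) :=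
  ⟨fun _ => BMt_isML, ⟨leftInverse_bmInv_BMt.injective, rightInverse_bmInv_BMt.surjective⟩,
    fun F n l => (congrFun (congrFun (leftInverse_bmInv_BMt F) n) l).symm⟩
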